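/- Independent amalgamation for bilinear spaces: given K-bilinear spaces V, W₁, W₂ and bilinear monomorphisms f₁ : V → W₁ and f₂ : V → W₂ (injective linear maps respecting the bilinear forms), there exists a K-bilinear space U and bilinear monomorphisms g₁ : W₁ → U and g₂ : W₂ → U such that g₁ ∘ f₁ = g₂ ∘ f₂ and g₁(W₁) ∩ g₂(W₂) = g₁(f₁(V)) as subspaces of U (i.e. the images are linearly independent over the image of V). -/

import Mathlib

/-!
Split `W₂ ≅ V × Q` along `f₂` and take `U = W₁ × Q`, with `W₁` sitting in the first factor and
`W₂ ≅ V × Q` mapped by `f₁ × id`; the two images then meet exactly in `f₁(V) × 0`.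
Writing `ρ₁ : U → W₁`, `ρ₂ : U → W₂`, `ρ₀ : U → V` for the projections obtained from a left
inverse `r₁` of `f₁`, the form `B₁ ∘ ρ₁ + B₂ ∘ ρ₂ - BV ∘ ρ₀` restricts to `B₁` and to `B₂`,
because on either image the unwanted summand factors through `V` and cancels against `BV`.
-/

universe u

open LinearMap

theorem LinearMap.exists_prod_linearEquiv_of_injective {K V W : Type*} [DivisionRing K]
    [AddCommGroup V] [Module K V] [AddCommGroup W] [Module K W] {f : V →ₗ[K] W}
    (hf : Function.Injective f) :
    ∃ (Q : Submodule K W) (e : (V × Q) ≃ₗ[K] W), ∀ v, e (v, 0) = f v := by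
  obtain ⟨Q, hQ⟩ := (range f).exists_isCompl
  refine ⟨Q, ((LinearEquiv.ofInjective f hf).prodCongr (.refl K Q)).trans
    ((range f).prodEquivOfIsCompl Q hQ), fun v => ?_⟩
  simp

theorem LinearMap.range_inl_inf_range_prodMap_id {R M N P : Type*} [Semiring R]
    [AddCommMonoid M] [AddCommMonoid N] [AddCommMonoid P] [Module R M] [Module R N] [Module R P]
    (f : M →ₗ[R] N) :
    range (inl R N P) ⊓ range (f.prodMap (id : P →ₗ[R] P)) = range (inl R N P ∘ₗ f) := by
  ext ⟨n, p⟩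
  simp only [Submodule.mem_inf, range_inl, mem_ker, snd_apply, range_prodMap, range_id,
    Submodule.mem_prod, Submodule.mem_top, and_true, mem_range, comp_apply, inl_apply,
    Prod.mk.injEq]
  aesop

theorem LinearMap.inclusionExclusion_compl₁₂_apply {K V W₁ W₂ U : Type*} [CommRing K]
    [AddCommGroup V] [Module K V] [AddCommGroup W₁] [Module K W₁] [AddCommGroup W₂] [Module K W₂]
    [AddCommGroup U] [Module K U]
    {BV : V →ₗ[K] V →ₗ[K] K} {B₁ : W₁ →ₗ[K] W₁ →ₗ[K] K} {B₂ : W₂ →ₗ[K] W₂ →ₗ[K] K}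
    {f₂ : V →ₗ[K] W₂} (hf₂b : ∀ x y, B₂ (f₂ x) (f₂ y) = BV x y)
    {ρ₀ : U →ₗ[K] V} {ρ₁ : U →ₗ[K] W₁} {ρ₂ : U →ₗ[K] W₂} {g : W₁ → U}
    (hρ₁ : ∀ w, ρ₁ (g w) = w) (hρ₂ : ∀ w, ρ₂ (g w) = f₂ (ρ₀ (g w))) (w w' : W₁) :
    (B₁.compl₁₂ ρ₁ ρ₁ + B₂.compl₁₂ ρ₂ ρ₂ - BV.compl₁₂ ρ₀ ρ₀) (g w) (g w') = B₁ w w' := by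
  simp [hρ₁, hρ₂, hf₂b]

theorem bilinear_independent_amalgamation {K : Type u} [Field K]
    (V W₁ W₂ : Type u) [AddCommGroup V] [Module K V]
    [AddCommGroup W₁] [Module K W₁] [AddCommGroup W₂] [Module K W₂]
    (BV : V →ₗ[K] V →ₗ[K] K) (B₁ : W₁ →ₗ[K] W₁ →ₗ[K] K) (B₂ : W₂ →ₗ[K] W₂ →ₗ[K] K)
    (f₁ : V →ₗ[K] W₁) (f₂ : V →ₗ[K] W₂)
    (hf₁ : Function.Injective f₁) (hf₁b : ∀ x y : V, B₁ (f₁ x) (f₁ y) = BV x y)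
    (hf₂ : Function.Injective f₂) (hf₂b : ∀ x y : V, B₂ (f₂ x) (f₂ y) = BV x y) :
    ∃ (U : Type u) (_ : AddCommGroup U) (_ : Module K U)
      (BU : U →ₗ[K] U →ₗ[K] K) (g₁ : W₁ →ₗ[K] U) (g₂ : W₂ →ₗ[K] U),
      Function.Injective g₁ ∧ (∀ x y : W₁, BU (g₁ x) (g₁ y) = B₁ x y) ∧
      Function.Injective g₂ ∧ (∀ x y : W₂, BU (g₂ x) (g₂ y) = B₂ x y) ∧
      g₁ ∘ₗ f₁ = g₂ ∘ₗ f₂ ∧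
      LinearMap.range g₁ ⊓ LinearMap.range g₂ = LinearMap.range (g₁ ∘ₗ f₁) := by
  obtain ⟨r₁, hr₁⟩ := f₁.exists_leftInverse_of_injective (ker_eq_bot.mpr hf₁)
  have hr₁f₁ (v : V) : r₁ (f₁ v) = v := DFunLike.congr_fun hr₁ v
  obtain ⟨Q, e, he⟩ := exists_prod_linearEquiv_of_injective hf₂
  let ρ₁ := fst K W₁ Q
  let ρ₀ := r₁ ∘ₗ ρ₁
  let ρ₂ := e.toLinearMap ∘ₗ r₁.prodMap id
  let g₂ := f₁.prodMap id ∘ₗ e.symm.toLinearMap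
  refine ⟨W₁ × Q, inferInstance, inferInstance,
    B₁.compl₁₂ ρ₁ ρ₁ + B₂.compl₁₂ ρ₂ ρ₂ - BV.compl₁₂ ρ₀ ρ₀, inl K W₁ Q, g₂,
    inl_injective, inclusionExclusion_compl₁₂_apply hf₂b (fun _ => rfl) (fun w => he (r₁ w)),
    (hf₁.prodMap Function.injective_id).comp e.symm.injective, fun x y => ?_, ?_, ?_⟩
  · rw [add_comm (B₁.compl₁₂ _ _)]
    refine inclusionExclusion_compl₁₂_apply hf₁b (fun w => ?_) (fun w => ?_) x y
    · simp [ρ₂, g₂, hr₁f₁]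
    · simp [ρ₀, ρ₁, g₂, hr₁f₁]
  · refine LinearMap.ext fun v => ?_
    simp [g₂, e.symm_apply_eq.mpr (he v).symm]
  · rw [range_comp_of_range_eq_top _ e.symm.range]
    exact range_inl_inf_range_prodMap_id f₁
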